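/- Let (R, P) be a commutative nonunitary Rota-Baxter algebra of weight 0 and f: Ш(x𝐤[x])⁰ → R a linear map satisfying f(x·y) = f(x)f(y) for all y and f(P_x(y)) = P(f(y)) for all y. Then f is a homomorphism of nonunitary Rota-Baxter algebras (i.e., f is multiplicative on all of Ш(x𝐤[x])⁰). -/
import Mathlib


variable {K : Type*} [CommRing K]

/-- Plain (weight-0) shuffle of two lists, as a multiset of lists. -/
def shufN : List ℕ → List ℕ → Multiset (List ℕ)
  | [], l => {l}
  | a :: as, [] => {a :: as}
  | a :: as, b :: bs =>
      ((shufN as (b :: bs)).map (a :: ·)) + ((shufN (a :: as) bs).map (b :: ·))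
  termination_by x y => x.length + y.length

/-- The product of `Ш(x𝐤[x])⁰` on pure tensors, encoded as lists of exponents:
`(x^{a}⊗𝔲)·(x^{b}⊗𝔳) = x^{a+b}⊗(𝔲 ш 𝔳)`. -/
noncomputable def mulW : List ℕ → List ℕ → (List ℕ →₀ K)
  | a :: u, b :: v =>
      ((shufN u v).map fun w => Finsupp.single ((a + b) :: w) (1 : K)).sum
  | _, _ => 0

/-- Multiplication by the generator `x` adds 1 to the first exponent. -/
def incFirst : List ℕ → List ℕ
  | [] => []
  | a :: t => (a + 1) :: t


section Aux
variable {R : Type*} [NonUnitalCommRing R]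

/-- Multiply `r` by `x`, `n` times. -/
def smulX (x : R) : ℕ → R → R
  | 0, r => r
  | n+1, r => x * smulX x n r

lemma smulX_succ (x : R) (n : ℕ) (r : R) : smulX x (n+1) r = x * smulX x n r := rfl

lemma smulX_mul (x : R) (n : ℕ) (r s : R) : smulX x n r * s = smulX x n (r * s) := by
  induction n with
  | zero => rfl
  | succ n ih => simp only [smulX, mul_assoc, ih]

lemma mul_smulX (x : R) (n : ℕ) (r s : R) : r * smulX x n s = smulX x n (r * s) := by
  rw [mul_comm, smulX_mul, mul_comm]

lemma smulX_succ' (x : R) (n : ℕ) (r : R) : smulX x (n+1) r = smulX x n (x * r) := by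
  induction n with
  | zero => rfl
  | succ n ih => rw [smulX_succ x (n+1), ih]; rfl

lemma smulX_add_exp (x : R) (m n : ℕ) (r : R) :
    smulX x (m + n) r = smulX x m (smulX x n r) := by
  induction m with
  | zero => simp [smulX]
  | succ m ih => rw [Nat.succ_add, smulX_succ, ih]; rfl

lemma smulX_zero (x : R) (n : ℕ) : smulX x n 0 = 0 := by
  induction n with
  | zero => rfl
  | succ n ih => rw [smulX_succ, ih, mul_zero]

lemma smulX_add (x : R) (n : ℕ) (a b : R) :
    smulX x n (a + b) = smulX x n a + smulX x n b := by
  induction n with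
  | zero => rfl
  | succ n ih => rw [smulX_succ, ih, mul_add]; rfl

lemma smulX_sum {α : Type*} (x : R) (n : ℕ) (S : Multiset α) (g : α → R) :
    (S.map fun w => smulX x n (g w)).sum = smulX x n (S.map g).sum := by
  induction S using Multiset.induction with
  | empty => simp [smulX_zero]
  | cons a S ih => simp [ih, smulX_add]

end Aux

lemma shufN_length : ∀ (u v : List ℕ), ∀ w ∈ shufN u v, w.length = u.length + v.length := by
  intro u v
  induction u, v using shufN.induct with
  | case1 l => simp [shufN]
  | case2 a as => simp [shufN]
  | case3 a as b bs ih1 ih2 =>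
    intro w hw
    rw [shufN] at hw
    simp only [Multiset.mem_add, Multiset.mem_map] at hw
    rcases hw with ⟨w', hw', rfl⟩ | ⟨w', hw', rfl⟩
    · simp [ih1 w' hw']; omega
    · simp [ih2 w' hw']; omega

lemma shufN_ne_nil (u v : List ℕ) (hv : v ≠ []) : ∀ w ∈ shufN u v, w ≠ [] := by
  intro w hw h
  have hl := shufN_length u v w hw
  rw [h] at hl
  simp only [List.length_nil] at hl
  have : v.length = 0 := by omega
  exact hv (List.length_eq_zero_iff.mp this)

/-- Let `(R,P)` be a commutative nonunitary Rota-Baxter algebra of weight 0 and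
`f : Ш(x𝐤[x])⁰ → R` a linear map such that `f(x·y) = f(x)f(y)` and
`f(P_x(y)) = P(f(y))` for all `y`.  Then `f` is a homomorphism of nonunitary
Rota-Baxter algebras, i.e. `f` is multiplicative on all of `Ш(x𝐤[x])⁰`.
(Basis elements of `Ш(x𝐤[x])⁰` are lists `[n₀,…,nₖ]` with `nₖ ≥ 1`; `P_x`
prepends a `0`.) -/
theorem multiplicativity_from_generator
    (R : Type*) [NonUnitalCommRing R] [Module K R]
    [SMulCommClass K R R] [IsScalarTower K R R]
    (P : R →ₗ[K] R) (hP : ∀ a b : R, P a * P b = P (a * P b) + P (P a * b))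
    (f : (List ℕ →₀ K) →ₗ[K] R)
    (hfx : ∀ l : List ℕ, l ≠ [] →
      f (Finsupp.single (incFirst l) 1) =
        f (Finsupp.single [1] 1) * f (Finsupp.single l 1))
    (hfP : ∀ l : List ℕ, l ≠ [] →
      f (Finsupp.single (0 :: l) 1) = P (f (Finsupp.single l 1))) :
    ∀ u v : List ℕ, u ≠ [] → v ≠ [] → 1 ≤ u.getLastD 0 → 1 ≤ v.getLastD 0 →
      f (mulW u v) = f (Finsupp.single u 1) * f (Finsupp.single v 1) := by
  set X : R := f (Finsupp.single [1] 1) with hX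
  have fcons : ∀ (c : ℕ) (v : List ℕ), v ≠ [] →
      f (Finsupp.single (c :: v) 1) = smulX X c (P (f (Finsupp.single v 1))) := by
    intro c v hv
    induction c with
    | zero => exact hfP v hv
    | succ c ih =>
      have h := hfx (c :: v) (by simp)
      simp only [incFirst] at h
      rw [h, ih]
      rfl
  have fsing : ∀ c : ℕ, f (Finsupp.single [c+1] 1) = smulX X c X := by
    intro c
    induction c with
    | zero => rfl
    | succ c ih =>
      have h := hfx [c+1] (by simp)
      simp only [incFirst] at h
      rw [h, ih]
      rfl
  have lastD_cons : ∀ (c : ℕ) (l : List ℕ), l ≠ [] →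
      (c :: l).getLastD 0 = l.getLastD 0 := by
    intro c l hl
    cases l with
    | nil => exact absurd rfl hl
    | cons a t => simp [List.getLastD_cons]
  have fsum : ∀ (S : Multiset (List ℕ)) (g : List ℕ → (List ℕ →₀ K)),
      f (S.map g).sum = (S.map fun w => f (g w)).sum := by
    intro S g
    rw [map_multiset_sum, Multiset.map_map]
    rfl
  have Psum : ∀ (S : Multiset (List ℕ)) (g : List ℕ → R),
      P (S.map g).sum = (S.map fun w => P (g w)).sum := by
    intro S g
    rw [map_multiset_sum, Multiset.map_map]
    rfl
  have claimA : ∀ (c : ℕ) (u' v : List ℕ), v ≠ [] →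
      (u' = [] → 1 ≤ c) →
      (u' ≠ [] → ((shufN u' v).map fun w => P (f (Finsupp.single w 1))).sum
          = P (f (Finsupp.single u' 1)) * P (f (Finsupp.single v 1))) →
      ((shufN u' v).map fun w => f (Finsupp.single (c :: w) 1)).sum
        = f (Finsupp.single (c :: u') 1) * P (f (Finsupp.single v 1)) := by
    intro c u' v hv hc hrec
    cases u' with
    | nil =>
      obtain ⟨c', rfl⟩ := Nat.exists_eq_add_of_le (hc rfl)
      rw [Nat.add_comm 1 c']
      simp only [shufN, Multiset.map_singleton, Multiset.sum_singleton]
      rw [fcons _ v hv, fsing c', smulX_mul, smulX_succ']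
    | cons a t =>
      have hne : (a :: t : List ℕ) ≠ [] := by simp
      rw [Multiset.map_congr rfl (fun w hw =>
        fcons c w (shufN_ne_nil _ _ hv w hw))]
      rw [smulX_sum, ← Psum]
      have hthis := hrec hne
      rw [← Psum] at hthis
      rw [hthis, ← smulX_mul, ← fcons c (a :: t) hne]
  have claimB : ∀ (d : ℕ) (u v' : List ℕ), u ≠ [] →
      (v' = [] → 1 ≤ d) →
      (v' ≠ [] → ((shufN u v').map fun w => P (f (Finsupp.single w 1))).sum
          = P (f (Finsupp.single u 1)) * P (f (Finsupp.single v' 1))) →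
      ((shufN u v').map fun w => f (Finsupp.single (d :: w) 1)).sum
        = P (f (Finsupp.single u 1)) * f (Finsupp.single (d :: v') 1) := by
    intro d u v' hu hd hrec
    cases v' with
    | nil =>
      obtain ⟨a, t, rfl⟩ : ∃ a t, u = a :: t := by
        cases u with
        | nil => exact absurd rfl hu
        | cons a t => exact ⟨a, t, rfl⟩
      obtain ⟨d', rfl⟩ := Nat.exists_eq_add_of_le (hd rfl)
      rw [Nat.add_comm 1 d']
      simp only [shufN, Multiset.map_singleton, Multiset.sum_singleton]
      rw [fcons _ (a :: t) (by simp), fsing d', mul_comm, smulX_mul, smulX_succ']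
    | cons b t =>
      have hne : (b :: t : List ℕ) ≠ [] := by simp
      rw [Multiset.map_congr rfl (fun w hw =>
        fcons d w (shufN_ne_nil _ _ hne w hw))]
      rw [smulX_sum, ← Psum]
      have hthis := hrec hne
      rw [← Psum] at hthis
      rw [hthis, mul_comm (P _) (P _), ← smulX_mul, ← fcons d (b :: t) hne, mul_comm]
  have key : ∀ (n : ℕ) (u v : List ℕ), u.length + v.length = n → u ≠ [] → v ≠ [] →
      1 ≤ u.getLastD 0 → 1 ≤ v.getLastD 0 →
      ((shufN u v).map fun w => P (f (Finsupp.single w 1))).sum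
        = P (f (Finsupp.single u 1)) * P (f (Finsupp.single v 1)) := by
    intro n
    induction n using Nat.strong_induction_on with
    | _ n IH =>
      intro u v hn hu hv hu1 hv1
      obtain ⟨c, u', rfl⟩ : ∃ c u', u = c :: u' := by
        cases u with
        | nil => exact absurd rfl hu
        | cons c u' => exact ⟨c, u', rfl⟩
      obtain ⟨d, v', rfl⟩ : ∃ d v', v = d :: v' := by
        cases v with
        | nil => exact absurd rfl hv
        | cons d v' => exact ⟨d, v', rfl⟩
      rw [shufN, Multiset.map_add, Multiset.map_map, Multiset.map_map, Multiset.sum_add]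
      simp only [Function.comp_def]
      have hc1 : u' = [] → 1 ≤ c := by
        intro h; subst h; simpa using hu1
      have hr1 : u' ≠ [] → ((shufN u' (d :: v')).map fun w =>
          P (f (Finsupp.single w 1))).sum
            = P (f (Finsupp.single u' 1)) * P (f (Finsupp.single (d :: v') 1)) := by
        intro hu'
        refine IH (u'.length + (d :: v').length) (by simp at hn ⊢; omega)
          u' (d :: v') rfl hu' (by simp) ?_ hv1
        rwa [lastD_cons c u' hu'] at hu1
      have hd1 : v' = [] → 1 ≤ d := by
        intro h; subst h; simpa using hv1
      have hr2 : v' ≠ [] → ((shufN (c :: u') v').map fun w =>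
          P (f (Finsupp.single w 1))).sum
            = P (f (Finsupp.single (c :: u') 1)) * P (f (Finsupp.single v' 1)) := by
        intro hv'
        refine IH ((c :: u').length + v'.length) (by simp at hn ⊢; omega)
          (c :: u') v' rfl (by simp) hv' hu1 ?_
        rwa [lastD_cons d v' hv'] at hv1
      have hA : ((shufN u' (d :: v')).map fun w =>
            P (f (Finsupp.single (c :: w) 1))).sum
          = P (f (Finsupp.single (c :: u') 1) * P (f (Finsupp.single (d :: v') 1))) := by
        rw [← Psum, claimA c u' (d :: v') (by simp) hc1 hr1]
      have hB : ((shufN (c :: u') v').map fun w =>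
            P (f (Finsupp.single (d :: w) 1))).sum
          = P (P (f (Finsupp.single (c :: u') 1)) * f (Finsupp.single (d :: v') 1)) := by
        rw [← Psum, claimB d (c :: u') v' (by simp) hd1 hr2]
      rw [hA, hB, ← hP]
  intro u v hu hv hu1 hv1
  obtain ⟨a, u', rfl⟩ : ∃ a u', u = a :: u' := by
    cases u with
    | nil => exact absurd rfl hu
    | cons a u' => exact ⟨a, u', rfl⟩
  obtain ⟨b, v', rfl⟩ : ∃ b v', v = b :: v' := by
    cases v with
    | nil => exact absurd rfl hv
    | cons b v' => exact ⟨b, v', rfl⟩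
  rw [mulW, fsum]
  cases u' with
  | nil =>
    have ha : 1 ≤ a := by simpa using hu1
    obtain ⟨a', rfl⟩ := Nat.exists_eq_add_of_le ha
    rw [Nat.add_comm 1 a']
    cases v' with
    | nil =>
      have hb : 1 ≤ b := by simpa using hv1
      obtain ⟨b', rfl⟩ := Nat.exists_eq_add_of_le hb
      rw [Nat.add_comm 1 b']
      simp only [shufN, Multiset.map_singleton, Multiset.sum_singleton]
      rw [show a' + 1 + (b' + 1) = (a' + (b' + 1)) + 1 by omega,
        fsing, fsing a', fsing b', smulX_mul, smulX_add_exp]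
      rfl
    | cons e t =>
      simp only [shufN, Multiset.map_singleton, Multiset.sum_singleton]
      rw [show a' + 1 + b = a' + (b + 1) by omega,
        fcons _ (e :: t) (by simp), fsing a', fcons b (e :: t) (by simp),
        smulX_mul, smulX_add_exp]
      rfl
  | cons e t =>
    have hAll : ((shufN (e :: t) v').map fun w =>
          f (Finsupp.single ((a + b) :: w) 1)).sum
        = smulX X (a + b) ((shufN (e :: t) v').map fun w =>
            P (f (Finsupp.single w 1))).sum := by
      cases v' with
      | nil =>
        simp only [shufN, Multiset.map_singleton, Multiset.sum_singleton]
        rw [fcons _ (e :: t) (by simp)]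
      | cons b2 t2 =>
        rw [Multiset.map_congr rfl (fun w hw =>
          fcons (a + b) w (shufN_ne_nil _ _ (by simp) w hw))]
        rw [smulX_sum]
    rw [hAll]
    cases v' with
    | nil =>
      have hb : 1 ≤ b := by simpa using hv1
      obtain ⟨b', rfl⟩ := Nat.exists_eq_add_of_le hb
      rw [Nat.add_comm 1 b']
      simp only [shufN, Multiset.map_singleton, Multiset.sum_singleton]
      rw [fcons a (e :: t) (by simp), fsing b', mul_comm, smulX_mul,
        show a + (b' + 1) = b' + (a + 1) by omega, smulX_add_exp]
      rfl
    | cons b2 t2 =>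
      have hkey := key ((e :: t).length + (b2 :: t2).length) (e :: t) (b2 :: t2) rfl
        (by simp) (by simp)
        (by rwa [lastD_cons a (e :: t) (by simp)] at hu1)
        (by rwa [lastD_cons b (b2 :: t2) (by simp)] at hv1)
      rw [hkey, fcons a (e :: t) (by simp), fcons b (b2 :: t2) (by simp),
        smulX_mul, mul_smulX, ← smulX_add_exp]
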